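/- arXiv:2605.24232 — 5 statements merged into one kernel-verified Lean document; each statement's English description precedes it below -/
import Mathlib

section
/- Let I = [a₀, b₀] and J = [c₀, d₀] be compact intervals, let f₀, f₁ be probability densities on I (measurable, nonnegative, with ∫_I f_i = 1) and let g₀, g₁ be probability densities on J satisfying g₀, g₁ ≥ ε on J for some ε > 0. Define the cumulative distribution functions F_i(x) = ∫_{a₀}^x f_i(s) ds for x ∈ I and G_i(y) = ∫_{c₀}^y g_i(s) ds for y ∈ J. Then for every x ∈ I and every y₀, y₁ ∈ J with G₀(y₀) = F₀(x) and G₁(y₁) = F₁(x), one has |y₁ − y₀| ≤ (1/ε)·( ∫_I |f₁ − f₀| + ∫_J |g₁ − g₀| ). -/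
/-!
Since `G₁(y₁) = F₁(x)` and `G₀(y₀) = F₀(x)`,
`∫_{y₀}^{y₁} g₁ = G₁(y₁) - G₁(y₀) = (F₁(x) - F₀(x)) + (G₀(y₀) - G₁(y₀))`.
The left side has absolute value at least `ε |y₁ - y₀|` because `g₁ ≥ ε`, and each bracket on the
right is a difference of two distribution functions, hence bounded by the `L¹` distance of the
densities.
-/

open MeasureTheory intervalIntegral Set

lemma MeasureTheory.IntegrableOn.intervalIntegrable_of_mem_Icc {f : ℝ → ℝ} {a b u v : ℝ}
    (hf : IntegrableOn f (Icc a b)) (hu : u ∈ Icc a b) (hv : v ∈ Icc a b) :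
    IntervalIntegrable f volume u v :=
  (hf.mono_set (uIcc_subset_Icc hu hv)).intervalIntegrable

lemma abs_intervalIntegral_le_integral_abs_of_mem_Icc {f : ℝ → ℝ} {a b x : ℝ}
    (hf : IntegrableOn f (Icc a b)) (hx : x ∈ Icc a b) :
    |∫ s in a..x, f s| ≤ ∫ s in a..b, |f s| :=
  have hab : a ≤ b := hx.1.trans hx.2
  (abs_integral_le_integral_abs hx.1).trans <|
    integral_mono_interval le_rfl hx.1 hx.2 (.of_forall fun _ => abs_nonneg _)
      (IntegrableOn.intervalIntegrable_of_mem_Icc hf.abs (left_mem_Icc.2 hab) (right_mem_Icc.2 hab))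

lemma abs_sub_intervalIntegral_le_integral_abs_sub {f g : ℝ → ℝ} {a b x : ℝ}
    (hf : IntegrableOn f (Icc a b)) (hg : IntegrableOn g (Icc a b)) (hx : x ∈ Icc a b) :
    |(∫ s in a..x, g s) - ∫ s in a..x, f s| ≤ ∫ s in a..b, |g s - f s| := by
  have ha : a ∈ Icc a b := left_mem_Icc.2 (hx.1.trans hx.2)
  rw [← integral_sub (hg.intervalIntegrable_of_mem_Icc ha hx)
    (hf.intervalIntegrable_of_mem_Icc ha hx)]
  exact abs_intervalIntegral_le_integral_abs_of_mem_Icc (hg.sub hf) hx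

lemma mul_abs_sub_le_abs_intervalIntegral {g : ℝ → ℝ} {u v ε : ℝ}
    (hg : IntervalIntegrable g volume u v) (hgε : ∀ y ∈ uIcc u v, ε ≤ g y) :
    ε * |v - u| ≤ |∫ s in u..v, g s| := by
  wlog huv : u ≤ v generalizing u v
  · rw [abs_sub_comm, integral_symm, abs_neg]
    exact this hg.symm (uIcc_comm u v ▸ hgε) (le_of_not_ge huv)
  calc ε * |v - u| = ∫ _ in u..v, ε := by
        rw [intervalIntegral.integral_const, abs_of_nonneg (sub_nonneg.2 huv), smul_eq_mul,
          mul_comm]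
    _ ≤ ∫ s in u..v, g s :=
        integral_mono_on huv intervalIntegrable_const hg fun y hy => hgε y (Icc_subset_uIcc hy)
    _ ≤ |∫ s in u..v, g s| := le_abs_self _

theorem stmt2_general (a₀ b₀ c₀ d₀ ε : ℝ) (hε : 0 < ε)
    (f₀ f₁ g₀ g₁ : ℝ → ℝ)
    (hf₀i : IntegrableOn f₀ (Set.Icc a₀ b₀)) (hf₁i : IntegrableOn f₁ (Set.Icc a₀ b₀))
    (hg₀i : IntegrableOn g₀ (Set.Icc c₀ d₀)) (hg₁i : IntegrableOn g₁ (Set.Icc c₀ d₀))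
    (hg₁ε : ∀ y ∈ Set.Icc c₀ d₀, ε ≤ g₁ y) :
    ∀ x ∈ Set.Icc a₀ b₀, ∀ y₀ ∈ Set.Icc c₀ d₀, ∀ y₁ ∈ Set.Icc c₀ d₀,
      (∫ s in c₀..y₀, g₀ s) = (∫ s in a₀..x, f₀ s) →
      (∫ s in c₀..y₁, g₁ s) = (∫ s in a₀..x, f₁ s) →
      |y₁ - y₀| ≤ (1 / ε) *
        ((∫ s in a₀..b₀, |f₁ s - f₀ s|) + ∫ s in c₀..d₀, |g₁ s - g₀ s|) := by
  intro x hx y₀ hy₀ y₁ hy₁ hG₀ hG₁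
  have hc : c₀ ∈ Icc c₀ d₀ := left_mem_Icc.2 (hy₀.1.trans hy₀.2)
  have hsplit : ∫ s in y₀..y₁, g₁ s = ((∫ s in a₀..x, f₁ s) - ∫ s in a₀..x, f₀ s) +
      ((∫ s in c₀..y₀, g₀ s) - ∫ s in c₀..y₀, g₁ s) := by
    rw [← integral_interval_sub_left (hg₁i.intervalIntegrable_of_mem_Icc hc hy₁)
        (hg₁i.intervalIntegrable_of_mem_Icc hc hy₀), hG₀, hG₁]
    ring
  have hF := abs_sub_intervalIntegral_le_integral_abs_sub hf₀i hf₁i hx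
  have hG := abs_sub_intervalIntegral_le_integral_abs_sub hg₀i hg₁i hy₀
  rw [abs_sub_comm] at hG
  rw [one_div, inv_mul_eq_div, le_div_iff₀ hε, mul_comm]
  calc ε * |y₁ - y₀| ≤ |∫ s in y₀..y₁, g₁ s| :=
        mul_abs_sub_le_abs_intervalIntegral (hg₁i.intervalIntegrable_of_mem_Icc hy₀ hy₁)
          fun y hy => hg₁ε y (uIcc_subset_Icc hy₀ hy₁ hy)
    _ ≤ _ := hsplit ▸ abs_add_le _ _
    _ ≤ _ := add_le_add hF hG

/-- **one-dimensional stability of optimal transport maps.**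
Let `I = [a₀, b₀]`, `J = [c₀, d₀]`, let `f₀, f₁` be probability densities on `I` and
`g₀, g₁` probability densities on `J` with `g₀, g₁ ≥ ε > 0` on `J`.  With
`Fᵢ(x) = ∫_{a₀}^x fᵢ` and `Gᵢ(y) = ∫_{c₀}^y gᵢ`, if `G₀(y₀) = F₀(x)` and
`G₁(y₁) = F₁(x)` for `x ∈ I`, `y₀, y₁ ∈ J`, then
`|y₁ - y₀| ≤ (1/ε)(∫_I |f₁ - f₀| + ∫_J |g₁ - g₀|)`. -/
theorem stmt2 (a₀ b₀ c₀ d₀ ε : ℝ) (hab : a₀ ≤ b₀) (hcd : c₀ ≤ d₀) (hε : 0 < ε)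
    (f₀ f₁ g₀ g₁ : ℝ → ℝ)
    (hf₀m : Measurable f₀) (hf₁m : Measurable f₁) (hg₀m : Measurable g₀) (hg₁m : Measurable g₁)
    (hf₀i : IntegrableOn f₀ (Set.Icc a₀ b₀)) (hf₁i : IntegrableOn f₁ (Set.Icc a₀ b₀))
    (hg₀i : IntegrableOn g₀ (Set.Icc c₀ d₀)) (hg₁i : IntegrableOn g₁ (Set.Icc c₀ d₀))
    (hf₀nn : ∀ x ∈ Set.Icc a₀ b₀, 0 ≤ f₀ x) (hf₁nn : ∀ x ∈ Set.Icc a₀ b₀, 0 ≤ f₁ x)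
    (hf₀1 : (∫ s in a₀..b₀, f₀ s) = 1) (hf₁1 : (∫ s in a₀..b₀, f₁ s) = 1)
    (hg₀1 : (∫ s in c₀..d₀, g₀ s) = 1) (hg₁1 : (∫ s in c₀..d₀, g₁ s) = 1)
    (hg₀ε : ∀ y ∈ Set.Icc c₀ d₀, ε ≤ g₀ y) (hg₁ε : ∀ y ∈ Set.Icc c₀ d₀, ε ≤ g₁ y) :
    ∀ x ∈ Set.Icc a₀ b₀, ∀ y₀ ∈ Set.Icc c₀ d₀, ∀ y₁ ∈ Set.Icc c₀ d₀,
      (∫ s in c₀..y₀, g₀ s) = (∫ s in a₀..x, f₀ s) →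
      (∫ s in c₀..y₁, g₁ s) = (∫ s in a₀..x, f₁ s) →
      |y₁ - y₀| ≤ (1 / ε) *
        ((∫ s in a₀..b₀, |f₁ s - f₀ s|) + ∫ s in c₀..d₀, |g₁ s - g₀ s|) :=
  stmt2_general a₀ b₀ c₀ d₀ ε hε f₀ f₁ g₀ g₁ hf₀i hf₁i hg₀i hg₁i hg₁ε
end

section
/- Let p > 0, and for a ∈ (0,1) let T_a : [0,1] → [0,1] be defined by T_a(y) = a(1 − (1 − y/a)^{1/(p+1)}) for 0 ≤ y ≤ a and T_a(y) = a + (1−a)((y−a)/(1−a))^{1/(p+1)} for a ≤ y ≤ 1. Then there exist c > 0 and ε₀ ∈ (0, 1/2) such that for every ε ∈ (0, ε₀), setting a(ε) := 1/(2(1−ε)), one has T_{a(ε)}(1/2) = (1 − ε^{1/(p+1)})/(2(1−ε)), T_{1/2}(1/2) = 1/2, and sup_{y ∈ [0,1]} |T_{a(ε)}(y) − T_{1/2}(y)| ≥ |T_{a(ε)}(1/2) − 1/2| ≥ c·ε^{1/(p+1)}. -/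
/-! At `a(ε) = 1/(2(1-ε))` the point `1/2` lies on the left branch of `T_{a(ε)}`, where
`1 - (1/2)/a(ε) = ε`, so `T_{a(ε)}(1/2) - 1/2 = (ε - ε^{1/(p+1)})/(2(1-ε))`. Once
`ε ≤ (1/2)^{(p+1)/p}` we have `2ε ≤ ε^{1/(p+1)}`, so this difference is at least
`ε^{1/(p+1)}/4` in absolute value. Since every `T_a` maps `[0,1]` into `[0,1]`, the supremum
of `|T_{a(ε)} - T_{1/2}|` is finite and dominates its value at `1/2`. -/

/-- The transport map `T_a` of the sharpness example: on `[0,1]`,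
`T_a(y) = a(1 - (1 - y/a)^{1/(p+1)})` for `y ≤ a` and
`a + (1-a)((y-a)/(1-a))^{1/(p+1)}` for `y ≥ a`. -/
noncomputable def Tfun (p a : ℝ) (y : ℝ) : ℝ :=
  if y ≤ a then a * (1 - (1 - y / a) ^ (1 / (p + 1)))
  else a + (1 - a) * ((y - a) / (1 - a)) ^ (1 / (p + 1))

open Real

lemma Tfun_mem_Icc {p a y : ℝ} (hp : 0 ≤ p + 1) (ha : a ∈ Set.Ioo (0 : ℝ) 1)
    (hy : y ∈ Set.Icc (0 : ℝ) 1) : Tfun p a y ∈ Set.Icc (0 : ℝ) 1 := by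
  obtain ⟨ha0, ha1⟩ := ha
  obtain ⟨hy0, hy1⟩ := hy
  have hr : 0 ≤ 1 / (p + 1) := by positivity
  unfold Tfun
  split_ifs with hya
  · have hb0 : 0 ≤ 1 - y / a := by rw [sub_nonneg]; exact (div_le_one ha0).2 hya
    have hb1 : 1 - y / a ≤ 1 := sub_le_self 1 (by positivity)
    have h0 := rpow_nonneg hb0 (1 / (p + 1))
    have h1 := rpow_le_one hb0 hb1 hr
    constructor <;> nlinarith
  · have h1a : 0 < 1 - a := by linarith
    have hb0 : 0 ≤ (y - a) / (1 - a) := div_nonneg (by linarith) h1a.le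
    have hb1 : (y - a) / (1 - a) ≤ 1 := (div_le_one h1a).2 (by linarith)
    have h0 := rpow_nonneg hb0 (1 / (p + 1))
    have h1 := rpow_le_one hb0 hb1 hr
    constructor <;> nlinarith

lemma bddAbove_range_abs_Tfun_sub {p a b : ℝ} (hp : 0 ≤ p + 1) (ha : a ∈ Set.Ioo (0 : ℝ) 1)
    (hb : b ∈ Set.Ioo (0 : ℝ) 1) :
    BddAbove (Set.range fun y : Set.Icc (0 : ℝ) 1 => |Tfun p a y - Tfun p b y|) := by
  refine ⟨1, ?_⟩
  rintro _ ⟨y, rfl⟩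
  obtain ⟨hTa0, hTa1⟩ := Tfun_mem_Icc hp ha y.2
  obtain ⟨hTb0, hTb1⟩ := Tfun_mem_Icc hp hb y.2
  exact abs_sub_le_of_nonneg_of_le hTa0 hTa1 hTb0 hTb1

lemma Tfun_self {p : ℝ} (hp : p + 1 ≠ 0) (a : ℝ) : Tfun p a a = a := by
  rcases eq_or_ne a 0 with rfl | ha
  · simp [Tfun]
  · simp [Tfun, div_self ha, zero_rpow (inv_ne_zero hp)]

lemma Tfun_half {p ε : ℝ} (hε0 : 0 ≤ ε) (hε1 : ε < 1) :
    Tfun p (1 / (2 * (1 - ε))) (1 / 2) = (1 - ε ^ (1 / (p + 1))) / (2 * (1 - ε)) := by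
  have h1ε : 0 < 1 - ε := by linarith
  have hle : (1 : ℝ) / 2 ≤ 1 / (2 * (1 - ε)) := by
    rw [le_div_iff₀ (by positivity)]; linarith
  have hleft : 1 - (1 / 2) / (1 / (2 * (1 - ε))) = ε := by field_simp; ring
  rw [Tfun, if_pos hle, hleft]
  ring

lemma two_mul_le_rpow_one_div_add_one {p ε : ℝ} (hp : 0 < p) (hε0 : 0 ≤ ε)
    (hε : ε ≤ (1 / 2) ^ ((p + 1) / p)) : 2 * ε ≤ ε ^ (1 / (p + 1)) := by
  have hp1 : p + 1 ≠ 0 := by positivity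
  have hsplit : ε = ε ^ (1 / (p + 1)) * ε ^ (p / (p + 1)) := by
    rw [← rpow_add' hε0 (by field_simp; positivity), ← add_div, add_comm, div_self hp1,
      rpow_one]
  have hsmall : ε ^ (p / (p + 1)) ≤ 1 / 2 := by
    calc ε ^ (p / (p + 1)) ≤ ((1 / 2) ^ ((p + 1) / p)) ^ (p / (p + 1)) :=
          rpow_le_rpow hε0 hε (by positivity)
      _ = 1 / 2 := by
          rw [← rpow_mul (by norm_num), div_mul_div_comm, mul_comm, div_self (by positivity), rpow_one]
  have ht := rpow_nonneg hε0 (1 / (p + 1))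
  nlinarith

lemma quarter_mul_rpow_le_abs_Tfun_half_sub_half {p ε : ℝ} (hp : 0 < p) (hε0 : 0 ≤ ε)
    (hε1 : ε < 1) (hε : ε ≤ (1 / 2) ^ ((p + 1) / p)) :
    1 / 4 * ε ^ (1 / (p + 1)) ≤ |Tfun p (1 / (2 * (1 - ε))) (1 / 2) - 1 / 2| := by
  set t := ε ^ (1 / (p + 1))
  have h2ε : 2 * ε ≤ t := two_mul_le_rpow_one_div_add_one hp hε0 hε
  have h1ε : 0 < 1 - ε := by linarith
  have hdiff : Tfun p (1 / (2 * (1 - ε))) (1 / 2) - 1 / 2 = -((t - ε) / (2 * (1 - ε))) := by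
    rw [Tfun_half hε0 hε1]; field_simp; ring
  rw [hdiff, abs_neg, abs_of_nonneg (div_nonneg (by linarith) (by positivity))]
  calc 1 / 4 * t ≤ (t - ε) / 2 := by linarith
    _ ≤ (t - ε) / (2 * (1 - ε)) :=
        div_le_div_of_nonneg_left (by linarith) (by positivity) (by linarith)

/-- For `p > 0` there are `c > 0` and `ε₀ ∈ (0, 1/2)` such that for all
`ε ∈ (0, ε₀)`, with `a(ε) = 1/(2(1-ε))`, one has
`T_{a(ε)}(1/2) = (1 - ε^{1/(p+1)})/(2(1-ε))`, `T_{1/2}(1/2) = 1/2`, and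
`sup_{y ∈ [0,1]} |T_{a(ε)}(y) - T_{1/2}(y)| ≥ |T_{a(ε)}(1/2) - 1/2| ≥ c·ε^{1/(p+1)}`. -/
theorem stmt4 (p : ℝ) (hp : 0 < p) :
    ∃ c > (0 : ℝ), ∃ ε₀ ∈ Set.Ioo (0 : ℝ) (1 / 2), ∀ ε ∈ Set.Ioo (0 : ℝ) ε₀,
      Tfun p (1 / (2 * (1 - ε))) (1 / 2) = (1 - ε ^ (1 / (p + 1))) / (2 * (1 - ε)) ∧
      Tfun p (1 / 2) (1 / 2) = 1 / 2 ∧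
      c * ε ^ (1 / (p + 1)) ≤ |Tfun p (1 / (2 * (1 - ε))) (1 / 2) - 1 / 2| ∧
      |Tfun p (1 / (2 * (1 - ε))) (1 / 2) - 1 / 2| ≤
        ⨆ y : Set.Icc (0 : ℝ) 1, |Tfun p (1 / (2 * (1 - ε))) y.1 - Tfun p (1 / 2) y.1| := by
  have hε₀ : (1 / 2 : ℝ) ^ ((p + 1) / p) < 1 / 2 := by
    simpa using rpow_lt_rpow_of_exponent_gt (by norm_num : (0 : ℝ) < 1 / 2) (by norm_num)
      ((one_lt_div hp).2 (lt_add_one p))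
  refine ⟨1 / 4, by norm_num, (1 / 2) ^ ((p + 1) / p), ⟨by positivity, hε₀⟩, ?_⟩
  rintro ε ⟨hε0, hε⟩
  have hε1 : ε < 1 := by linarith
  have hp1 : 0 < p + 1 := by linarith
  have hhalf : Tfun p (1 / 2) (1 / 2) = 1 / 2 := Tfun_self hp1.ne' _
  have ha : 1 / (2 * (1 - ε)) ∈ Set.Ioo (0 : ℝ) 1 :=
    ⟨by have : 0 < 1 - ε := by linarith
        positivity,
     by rw [div_lt_one (by linarith)]; linarith⟩
  refine ⟨Tfun_half hε0.le hε1, hhalf,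
    quarter_mul_rpow_le_abs_Tfun_half_sub_half hp hε0.le hε1 hε.le, ?_⟩
  calc |Tfun p (1 / (2 * (1 - ε))) (1 / 2) - 1 / 2|
      = |Tfun p (1 / (2 * (1 - ε))) (1 / 2) - Tfun p (1 / 2) (1 / 2)| := by rw [hhalf]
    _ ≤ _ := le_ciSup (bddAbove_range_abs_Tfun_sub hp1.le ha (by norm_num))
        (⟨1 / 2, by norm_num⟩ : Set.Icc (0 : ℝ) 1)
end

section
/- Let Ω ⊂ ℝ^d be open and bounded with closure K, let α ∈ (0,1), M > 0, and let f : [0,1] × K → ℝ satisfy: (1) for each t ∈ [0,1], the function f(t,·) is α-Hölder continuous on K; (2) for each x ∈ K, t ↦ f(t,x) is differentiable on (0,1), and there is a continuous function ∂f : [0,1] × K → ℝ which equals the t-derivative of f at every (t,x) ∈ (0,1) × K; (3) for every t ∈ (0,1), sup_{x ∈ K} |∂f(t,x)| + sup_{x ≠ y ∈ K} |∂f(t,x) − ∂f(t,y)|/|x − y|^α ≤ M. Then for every β ∈ (0, α) and every t ∈ (0,1), writing q_h(x) := (f(t+h, x) − f(t, x))/h − ∂f(t, x) for h ≠ 0 with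 t + h ∈ [0,1], one has lim_{h → 0} [ sup_{x ∈ K} |q_h(x)| + sup_{x ≠ y ∈ K} |q_h(x) − q_h(y)| / |x − y|^β ] = 0; that is, t ↦ f(t,·) is Fréchet differentiable as a curve in the Hölder space C^{0,β}(K) with derivative ∂f(t,·). -/
/-!
By the mean value theorem, `q_h(x) = ∂f(ξ, x) - ∂f(t, x)` for some `ξ` between `t` and `t + h`,
so `q_h → 0` uniformly by uniform continuity of `∂f` on the compact set `[0,1] × K`. In the same
way `q_h(x) - q_h(y)` is a difference of two increments `∂f(s, x) - ∂f(s, y)`, so every `q_h` is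
`α`-Hölder with constant `2M`. Such a function, if `ε`-small in sup norm, is small in `C^{0,β}`:
at distances `u ≤ r` one uses `2M u^α ≤ 2M r^(α-β) u^β`, at distances `u > r` one uses
`2ε ≤ 2ε r^(-β) u^β`.
-/

open Set

lemma exists_mem_uIcc_slope_eq {g g' : ℝ → ℝ} {a b : ℝ} (hab : a ≠ b)
    (hg : ∀ s ∈ uIcc a b, HasDerivAt g (g' s) s) : ∃ c ∈ uIcc a b, slope g a b = g' c := by
  wlog hlt : a < b generalizing a b
  · obtain ⟨c, hc, hslope⟩ :=
      this hab.symm (by rwa [uIcc_comm]) (hab.lt_or_gt.resolve_left hlt)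
    exact ⟨c, uIcc_comm a b ▸ hc, by rw [slope_comm, hslope]⟩
  rw [uIcc_of_le hlt.le] at hg ⊢
  obtain ⟨c, hc, hslope⟩ := exists_hasDerivAt_eq_slope g g' hlt
    (fun s hs => (hg s hs).continuousAt.continuousWithinAt)
    (fun s hs => hg s (Ioo_subset_Icc_self hs))
  exact ⟨c, Ioo_subset_Icc_self hc, by rw [slope_def_field, hslope]⟩

lemma exists_mem_uIcc_add_sub_div_eq {g g' : ℝ → ℝ} {t h : ℝ} (hh : h ≠ 0)
    (hg : ∀ s ∈ uIcc t (t + h), HasDerivAt g (g' s) s) :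
    ∃ ξ ∈ uIcc t (t + h), (g (t + h) - g t) / h = g' ξ := by
  obtain ⟨ξ, hξ, hslope⟩ := exists_mem_uIcc_slope_eq (by simpa using hh) hg
  exact ⟨ξ, hξ, by rwa [slope_def_field, add_sub_cancel_left] at hslope⟩

lemma abs_sub_diffQuot_sub_le {E : Type*} [SeminormedAddCommGroup E] {K : Set E}
    {I : Set ℝ} (hI : I.OrdConnected) {f f' : ℝ → E → ℝ} {α M t h : ℝ} (ht : t ∈ I)
    (hth : t + h ∈ I) (hh : h ≠ 0)
    (hderiv : ∀ x ∈ K, ∀ s ∈ I, HasDerivAt (fun s => f s x) (f' s x) s)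
    (hhol : ∀ s ∈ I, ∀ x ∈ K, ∀ y ∈ K, |f' s x - f' s y| ≤ M * ‖x - y‖ ^ α)
    {x y : E} (hx : x ∈ K) (hy : y ∈ K) :
    |((f (t + h) x - f t x) / h - f' t x) - ((f (t + h) y - f t y) / h - f' t y)| ≤
      2 * M * ‖x - y‖ ^ α := by
  have hseg := hI.uIcc_subset ht hth
  obtain ⟨ξ, hξ, hq⟩ := exists_mem_uIcc_add_sub_div_eq (g := fun s => f s x - f s y)
    (g' := fun s => f' s x - f' s y) hh
    fun s hs => (hderiv x hx s (hseg hs)).sub (hderiv y hy s (hseg hs))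
  have hqxy : ((f (t + h) x - f t x) / h - f' t x) - ((f (t + h) y - f t y) / h - f' t y) =
      (f' ξ x - f' ξ y) - (f' t x - f' t y) := by
    rw [← hq]; ring
  rw [hqxy]
  linarith [abs_sub (f' ξ x - f' ξ y) (f' t x - f' t y), hhol ξ (hseg hξ) x hx y hy,
    hhol t ht x hx y hy]

lemma exists_pos_forall_le_mul_rpow_of_le_mul_rpow {α β A δ : ℝ} (hβ : 0 ≤ β) (hβα : β < α)
    (hA : 0 ≤ A) (hδ : 0 < δ) :
    ∃ ε > 0, ∀ u ≥ 0, ∀ D, D ≤ ε → D ≤ A * u ^ α → D ≤ δ * u ^ β := by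
  set r := (δ / (A + 1)) ^ (α - β)⁻¹
  have hr : 0 < r := by positivity
  have hAr : A * r ^ (α - β) ≤ δ := by
    rw [Real.rpow_inv_rpow (by positivity) (sub_pos.2 hβα).ne']
    calc A * (δ / (A + 1)) ≤ (A + 1) * (δ / (A + 1)) := by gcongr; linarith
      _ = δ := by field_simp
  refine ⟨δ * r ^ β, by positivity, fun u hu D hDε hDA => ?_⟩
  rcases le_or_gt u r with hur | hru
  · have hα : α - β + β ≠ 0 := by rw [sub_add_cancel]; exact (hβ.trans_lt hβα).ne'
    calc D ≤ A * u ^ α := hDA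
      _ = A * u ^ (α - β) * u ^ β := by rw [mul_assoc, ← Real.rpow_add' hu hα, sub_add_cancel]
      _ ≤ A * r ^ (α - β) * u ^ β := by gcongr
      _ ≤ δ * u ^ β := by gcongr
  · exact hDε.trans (by gcongr)

lemma exists_pos_holder_small_of_sup_small {X : Type*} [PseudoMetricSpace X] (s : Set X)
    {α β A δ : ℝ} (hβ : 0 ≤ β) (hβα : β < α) (hA : 0 ≤ A) (hδ : 0 < δ) :
    ∃ ε > 0, ∀ g : X → ℝ, (∀ x ∈ s, |g x| ≤ ε) →
      (∀ x ∈ s, ∀ y ∈ s, |g x - g y| ≤ A * dist x y ^ α) →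
      (∀ x ∈ s, |g x| ≤ δ) ∧ ∀ x ∈ s, ∀ y ∈ s, |g x - g y| ≤ δ * dist x y ^ β := by
  obtain ⟨ε, hε, hinterp⟩ := exists_pos_forall_le_mul_rpow_of_le_mul_rpow hβ hβα hA hδ
  refine ⟨min δ (ε / 2), by positivity, fun g hsup hhol => ⟨?_, ?_⟩⟩
  · exact fun x hx => (hsup x hx).trans (min_le_left _ _)
  · intro x hx y hy
    refine hinterp _ dist_nonneg _ ?_ (hhol x hx y hy)
    have hx' := (hsup x hx).trans (min_le_right _ _)
    have hy' := (hsup y hy).trans (min_le_right _ _)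
    linarith [abs_sub (g x) (g y)]

lemma IsCompact.exists_pos_forall_abs_sub_lt_of_continuousOn_prod {X Y : Type*}
    [PseudoMetricSpace X] [PseudoMetricSpace Y] {S : Set X} {K : Set Y} (hS : IsCompact S)
    (hK : IsCompact K) {F : X → Y → ℝ} (hF : ContinuousOn (fun p : X × Y => F p.1 p.2) (S ×ˢ K))
    {ε : ℝ} (hε : 0 < ε) :
    ∃ η > 0, ∀ s ∈ S, ∀ s' ∈ S, dist s s' < η → ∀ x ∈ K, |F s x - F s' x| < ε := by
  obtain ⟨η, hη, hunif⟩ :=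
    Metric.uniformContinuousOn_iff.1 ((hS.prod hK).uniformContinuousOn_of_continuous hF) ε hε
  refine ⟨η, hη, fun s hs s' hs' hss' x hx => ?_⟩
  have hdist : dist (s, x) (s', x) < η := by
    rw [Prod.dist_eq, dist_self]
    exact max_lt hss' hη
  simpa only [Real.dist_eq] using hunif (s, x) ⟨hs, hx⟩ (s', x) ⟨hs', hx⟩ hdist

theorem stmt11_general {d : ℕ} (Ω : Set (EuclideanSpace ℝ (Fin d)))
    (hbd : Bornology.IsBounded Ω) (α M : ℝ) (hM : 0 < M)
    (f f' : ℝ → EuclideanSpace ℝ (Fin d) → ℝ)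
    (hderiv : ∀ x ∈ closure Ω, ∀ t ∈ Set.Ioo (0 : ℝ) 1,
      HasDerivAt (fun s => f s x) (f' t x) t)
    (hcont : ContinuousOn (fun p : ℝ × EuclideanSpace ℝ (Fin d) => f' p.1 p.2)
      (Set.Icc (0 : ℝ) 1 ×ˢ closure Ω))
    (hboundhol : ∀ t ∈ Set.Ioo (0 : ℝ) 1, ∀ x ∈ closure Ω, ∀ y ∈ closure Ω,
      |f' t x - f' t y| ≤ M * ‖x - y‖ ^ α) :
    ∀ β ∈ Set.Ioo (0 : ℝ) α, ∀ t ∈ Set.Ioo (0 : ℝ) 1, ∀ δ > (0 : ℝ), ∃ h₀ > (0 : ℝ),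
      ∀ h : ℝ, h ≠ 0 → |h| < h₀ → t + h ∈ Set.Icc (0 : ℝ) 1 →
        (∀ x ∈ closure Ω, |(f (t + h) x - f t x) / h - f' t x| ≤ δ) ∧
        (∀ x ∈ closure Ω, ∀ y ∈ closure Ω,
          |((f (t + h) x - f t x) / h - f' t x) - ((f (t + h) y - f t y) / h - f' t y)| ≤
            δ * ‖x - y‖ ^ β) := by
  intro β hβ t ht δ hδ
  obtain ⟨ε, hε, hsmall⟩ :=
    exists_pos_holder_small_of_sup_small (closure Ω) hβ.1.le hβ.2 (by positivity : 0 ≤ 2 * M) hδ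
  obtain ⟨η, hη, hunif⟩ := isCompact_Icc.exists_pos_forall_abs_sub_lt_of_continuousOn_prod
    hbd.isCompact_closure hcont hε
  refine ⟨min η (min t (1 - t)), lt_min hη (lt_min ht.1 (by linarith [ht.2])),
    fun h hh hlt _ => ?_⟩
  have hth : t + h ∈ Ioo 0 1 := by
    have := abs_lt.1 (hlt.trans_le (min_le_right _ _))
    constructor <;> linarith [min_le_left t (1 - t), min_le_right t (1 - t)]
  have hseg := ordConnected_Ioo.uIcc_subset ht hth
  have hclose : ∀ ξ ∈ uIcc t (t + h), dist t ξ < η := fun ξ hξ =>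
    (Real.dist_left_le_of_mem_uIcc hξ).trans_lt <| by
      simpa [Real.dist_eq] using hlt.trans_le (min_le_left _ _)
  set q := fun x => (f (t + h) x - f t x) / h - f' t x
  have hq_sup : ∀ x ∈ closure Ω, |q x| ≤ ε := by
    intro x hx
    obtain ⟨ξ, hξ, hq⟩ := exists_mem_uIcc_add_sub_div_eq hh fun s hs => hderiv x hx s (hseg hs)
    simp only [q, hq, abs_sub_comm (f' ξ x)]
    exact (hunif t (Ioo_subset_Icc_self ht) ξ (Ioo_subset_Icc_self (hseg hξ)) (hclose ξ hξ) x
      hx).le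
  have hq_hol : ∀ x ∈ closure Ω, ∀ y ∈ closure Ω, |q x - q y| ≤ 2 * M * dist x y ^ α :=
    fun x hx y hy => by
      simpa only [dist_eq_norm] using
        abs_sub_diffQuot_sub_le ordConnected_Ioo ht hth hh hderiv hboundhol hx hy
  simpa only [dist_eq_norm] using hsmall q hq_sup hq_hol

/-- Suppose `Ω ⊂ ℝ^d` is open and bounded with closure `K`,
`f : [0,1] × K → ℝ` is `α`-Hölder in `x` for each `t`, differentiable in `t` on `(0,1)`
with derivative `f'` continuous on `[0,1] × K` and with `C^{0,α}`-norm in `x` bounded by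
`M` uniformly in `t`.  Then for every `β ∈ (0, α)` and `t ∈ (0,1)` the incremental
quotients `q_h = (f(t+h,·) - f(t,·))/h - f'(t,·)` tend to `0` in the `C^{0,β}(K)` norm as
`h → 0`; that is, `t ↦ f(t,·)` is Fréchet differentiable as a curve in `C^{0,β}(K)` with
derivative `f'(t,·)`. -/
theorem stmt11 {d : ℕ} (Ω : Set (EuclideanSpace ℝ (Fin d))) (hΩ : IsOpen Ω)
    (hbd : Bornology.IsBounded Ω) (α M : ℝ) (hα : α ∈ Set.Ioo (0 : ℝ) 1) (hM : 0 < M)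
    (f f' : ℝ → EuclideanSpace ℝ (Fin d) → ℝ)
    (hHolder : ∀ t ∈ Set.Icc (0 : ℝ) 1, ∃ C : ℝ, ∀ x ∈ closure Ω, ∀ y ∈ closure Ω,
      |f t x - f t y| ≤ C * ‖x - y‖ ^ α)
    (hderiv : ∀ x ∈ closure Ω, ∀ t ∈ Set.Ioo (0 : ℝ) 1,
      HasDerivAt (fun s => f s x) (f' t x) t)
    (hcont : ContinuousOn (fun p : ℝ × EuclideanSpace ℝ (Fin d) => f' p.1 p.2)
      (Set.Icc (0 : ℝ) 1 ×ˢ closure Ω))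
    (hboundsup : ∀ t ∈ Set.Ioo (0 : ℝ) 1, ∀ x ∈ closure Ω, |f' t x| ≤ M)
    (hboundhol : ∀ t ∈ Set.Ioo (0 : ℝ) 1, ∀ x ∈ closure Ω, ∀ y ∈ closure Ω,
      |f' t x - f' t y| ≤ M * ‖x - y‖ ^ α) :
    ∀ β ∈ Set.Ioo (0 : ℝ) α, ∀ t ∈ Set.Ioo (0 : ℝ) 1, ∀ δ > (0 : ℝ), ∃ h₀ > (0 : ℝ),
      ∀ h : ℝ, h ≠ 0 → |h| < h₀ → t + h ∈ Set.Icc (0 : ℝ) 1 →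
        (∀ x ∈ closure Ω, |(f (t + h) x - f t x) / h - f' t x| ≤ δ) ∧
        (∀ x ∈ closure Ω, ∀ y ∈ closure Ω,
          |((f (t + h) x - f t x) / h - f' t x) - ((f (t + h) y - f t y) / h - f' t y)| ≤
            δ * ‖x - y‖ ^ β) :=
  stmt11_general Ω hbd α M hM f f' hderiv hcont hboundhol
end

section
/- Let Ω ⊂ ℝ^d be a bounded convex open set, α ∈ (0,1], 0 < λ ≤ Λ, a > 0, M > 0. Let ζ : ℝ^d → ℝ be twice continuously differentiable with λ·I ≤ D²ζ(x) ≤ Λ·I for all x ∈ Ω and ‖D²ζ(x) − D²ζ(y)‖ ≤ M|x − y|^α for all x, y ∈ Ω (operator norm). Let f₀ : Ω → ℝ satisfy a ≤ f₀(x) ≤ M and |f₀(x) − f₀(y)| ≤ M|x − y|^α for all x, y ∈ Ω. Define h(x) := f₀(x) / det D²ζ(x). Then a·Λ^{−d} ≤ h(x) ≤ M·λ^{−d} for all x ∈ Ω, and there exists a constant C depending only on a, M, λ, Λ, α and d such that |h(x) − h(y)| ≤ C·‖∇ζ(x) − ∇ζ(y)‖^α for all x, y ∈ Ω. -/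
/-!
The eigenvalues of `D²ζ(x)` lie in `[λ, Λ]`, so `λ^d ≤ det D²ζ(x) ≤ Λ^d`, which gives the two-sided
bound on `h`. The entries of `D²ζ` are bounded by `Λ` and are `α`-Hölder, and the determinant is
Lipschitz on matrices with bounded entries, so `det D²ζ` is `α`-Hölder; hence so is the quotient
`h = f₀ / det D²ζ` of Hölder functions with denominator bounded below. Finally, `D²ζ ≥ λ` on the
convex set `Ω` makes `∇ζ` strongly monotone, `λ |x - y| ≤ |∇ζ(x) - ∇ζ(y)|`, which turns Hölder
continuity in `x` into Hölder continuity in `∇ζ(x)`.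
-/

open Matrix

/-- The Hessian matrix of second partial derivatives of a function on Euclidean space. -/
noncomputable def hessE {d : ℕ} (f : EuclideanSpace ℝ (Fin d) → ℝ)
    (x : EuclideanSpace ℝ (Fin d)) : Matrix (Fin d) (Fin d) ℝ :=
  Matrix.of fun i j =>
    fderiv ℝ (fun y => fderiv ℝ f y (EuclideanSpace.single j 1)) x (EuclideanSpace.single i 1)

open scoped MatrixOrder

lemma Finset.abs_prod_sub_prod_le {ι : Type*} (s : Finset ι) {f g : ι → ℝ} {K ε : ℝ}
    (hf : ∀ i ∈ s, |f i| ≤ K) (hg : ∀ i ∈ s, |g i| ≤ K) (hfg : ∀ i ∈ s, |f i - g i| ≤ ε) :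
    |∏ i ∈ s, f i - ∏ i ∈ s, g i| ≤ s.card * K ^ (s.card - 1) * ε := by
  classical
  induction s using Finset.induction_on with
  | empty => simp
  | @insert i s hi ih =>
    simp only [Finset.forall_mem_insert] at hf hg hfg
    have hK : 0 ≤ K := (abs_nonneg _).trans hf.1
    have hε : 0 ≤ ε := (abs_nonneg _).trans hfg.1
    have hprod : |∏ j ∈ s, g j| ≤ K ^ s.card := by
      rw [Finset.abs_prod]
      exact (Finset.prod_le_prod (fun j _ => abs_nonneg _) hg.2).trans_eq
        (by rw [Finset.prod_const])
    rw [Finset.prod_insert hi, Finset.prod_insert hi, Finset.card_insert_of_notMem hi,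
      show f i * ∏ j ∈ s, f j - g i * ∏ j ∈ s, g j
        = f i * (∏ j ∈ s, f j - ∏ j ∈ s, g j) + (f i - g i) * ∏ j ∈ s, g j by ring]
    calc |f i * (∏ j ∈ s, f j - ∏ j ∈ s, g j) + (f i - g i) * ∏ j ∈ s, g j|
        ≤ |f i| * |∏ j ∈ s, f j - ∏ j ∈ s, g j| + |f i - g i| * |∏ j ∈ s, g j| :=
          (abs_add_le _ _).trans_eq (by rw [abs_mul, abs_mul])
      _ ≤ K * (s.card * K ^ (s.card - 1) * ε) + ε * K ^ s.card := by
          gcongr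
          exacts [hf.1, ih hf.2 hg.2 hfg.2, hfg.1]
      _ = (s.card + 1 : ℕ) * K ^ (s.card + 1 - 1) * ε := by
          rcases Nat.eq_zero_or_pos s.card with h | h
          · simp [h]
          · rw [Nat.add_sub_cancel, ← Nat.sub_add_cancel h, pow_succ]; push_cast; ring

lemma abs_div_sub_div_le {f₁ f₂ D₁ D₂ m M ε δ : ℝ} (hm : 0 < m) (h₁ : m ≤ D₁) (h₂ : m ≤ D₂)
    (hf₂ : |f₂| ≤ M) (hf : |f₁ - f₂| ≤ ε) (hD : |D₁ - D₂| ≤ δ) :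
    |f₁ / D₁ - f₂ / D₂| ≤ ε / m + M * δ / m ^ 2 := by
  have hD₁ := hm.trans_le h₁
  have hD₂ := hm.trans_le h₂
  have hM : 0 ≤ M := (abs_nonneg _).trans hf₂
  rw [show f₁ / D₁ - f₂ / D₂ = (f₁ - f₂) / D₁ + f₂ * (D₂ - D₁) / (D₁ * D₂) by
    field_simp; ring]
  refine (abs_add_le _ _).trans (add_le_add ?_ ?_)
  · rw [abs_div, abs_of_pos hD₁]
    exact div_le_div₀ ((abs_nonneg _).trans hf) hf hm h₁
  · rw [abs_div, abs_mul, abs_of_pos (mul_pos hD₁ hD₂), abs_sub_comm, sq]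
    exact div_le_div₀ (mul_nonneg hM ((abs_nonneg _).trans hD))
      (mul_le_mul hf₂ hD (abs_nonneg _) hM) (mul_pos hm hm) (mul_le_mul h₁ h₂ hm.le hD₁.le)

namespace Matrix

variable {n : Type*} [DecidableEq n] {A : Matrix n n ℝ} {c C : ℝ}

lemma isHermitian_of_smul_one_le (h : c • 1 ≤ A) : A.IsHermitian := by
  simpa using h.isHermitian.add (isHermitian_one.smul (IsSelfAdjoint.all c))

variable [Fintype n]

lemma mul_dotProduct_self_le_of_smul_one_le (h : c • 1 ≤ A) (v : n → ℝ) :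
    c * (v ⬝ᵥ v) ≤ v ⬝ᵥ (A *ᵥ v) := by
  have := h.dotProduct_mulVec_nonneg v
  simp only [star_trivial, sub_mulVec, smul_mulVec, one_mulVec, dotProduct_sub,
    dotProduct_smul, smul_eq_mul] at this
  linarith

lemma dotProduct_mulVec_le_of_le_smul_one (h : A ≤ C • 1) (v : n → ℝ) :
    v ⬝ᵥ (A *ᵥ v) ≤ C * (v ⬝ᵥ v) := by
  have := h.dotProduct_mulVec_nonneg v
  simp only [star_trivial, sub_mulVec, smul_mulVec, one_mulVec, dotProduct_sub,
    dotProduct_smul, smul_eq_mul] at this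
  linarith

lemma IsHermitian.eigenvalues_mem_Icc (hA : A.IsHermitian) (h₁ : c • 1 ≤ A) (h₂ : A ≤ C • 1)
    (i : n) : hA.eigenvalues i ∈ Set.Icc c C := by
  set v : n → ℝ := (hA.eigenvectorBasis i).ofLp
  have hv : v ⬝ᵥ v = 1 := by
    have := real_inner_self_eq_norm_sq (hA.eigenvectorBasis i)
    rw [hA.eigenvectorBasis.orthonormal.1 i, EuclideanSpace.inner_eq_star_dotProduct] at this
    simpa using this
  have hAv : v ⬝ᵥ (A *ᵥ v) = hA.eigenvalues i := by
    simp [v, hA.mulVec_eigenvectorBasis i, hv]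
  have hlow := mul_dotProduct_self_le_of_smul_one_le h₁ v
  have hupp := dotProduct_mulVec_le_of_le_smul_one h₂ v
  rw [hAv, hv, mul_one] at hlow hupp
  exact ⟨hlow, hupp⟩

lemma det_mem_Icc (hc : 0 ≤ c) (h₁ : c • 1 ≤ A) (h₂ : A ≤ C • 1) :
    A.det ∈ Set.Icc (c ^ Fintype.card n) (C ^ Fintype.card n) := by
  have hA := isHermitian_of_smul_one_le h₁
  have hμ := hA.eigenvalues_mem_Icc h₁ h₂
  rw [hA.det_eq_prod_eigenvalues]
  simp only [RCLike.ofReal_real_eq_id, id_eq]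
  constructor
  · exact (by rw [Finset.prod_const, Finset.card_univ] : c ^ Fintype.card n = ∏ _i : n, c).trans_le
      (Finset.prod_le_prod (fun i _ => hc) (fun i _ => (hμ i).1))
  · exact (Finset.prod_le_prod (fun i _ => hc.trans (hμ i).1) (fun i _ => (hμ i).2)).trans_eq
      (by rw [Finset.prod_const, Finset.card_univ])

lemma PosSemidef.two_mul_abs_apply_le {B : Matrix n n ℝ} (hB : B.PosSemidef) (i j : n) :
    2 * |B i j| ≤ B i i + B j j := by
  have hsym : B j i = B i j := by simpa using congrFun (congrFun hB.isHermitian i) j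
  have quad (s : ℝ) : 0 ≤ B i i + s * B i j + s * B j i + s * s * B j j := by
    have := hB.dotProduct_mulVec_nonneg (Pi.single i 1 + s • Pi.single j 1)
    simp only [star_trivial, mulVec_add, mulVec_smul, mulVec_single_one, col_apply,
      dotProduct_add, add_dotProduct, single_dotProduct, smul_dotProduct, dotProduct_smul,
      one_mul, smul_eq_mul] at this
    linarith
  have := quad 1
  have := quad (-1)
  have : |B i j| ≤ (B i i + B j j) / 2 := abs_le.2 ⟨by nlinarith, by nlinarith⟩
  linarith

lemma abs_apply_le_of_smul_one_le_of_le_smul_one (hc : 0 ≤ c) (h₁ : c • 1 ≤ A)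
    (h₂ : A ≤ C • 1) (i j : n) : |A i j| ≤ C := by
  have hA : A.PosSemidef :=
    nonneg_iff_posSemidef.1 (le_trans (nonneg_iff_posSemidef.2 (PosSemidef.one.smul hc)) h₁)
  have hdiag (k : n) : A k k ≤ C := by
    simpa using h₂.diag_nonneg (i := k)
  linarith [hA.two_mul_abs_apply_le i j, hdiag i, hdiag j]

lemma abs_det_sub_det_le {B : Matrix n n ℝ} {K ε : ℝ}
    (hA : ∀ i j, |A i j| ≤ K) (hB : ∀ i j, |B i j| ≤ K) (hAB : ∀ i j, |A i j - B i j| ≤ ε) :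
    |A.det - B.det| ≤
      (Fintype.card n).factorial * (Fintype.card n * K ^ (Fintype.card n - 1) * ε) := by
  rw [det_apply, det_apply, ← Finset.sum_sub_distrib]
  refine (Finset.abs_sum_le_sum_abs _ _).trans <| (Finset.sum_le_card_nsmul _ _
    (Fintype.card n * K ^ (Fintype.card n - 1) * ε) fun σ _ => ?_).trans_eq ?_
  · rw [← smul_sub]
    rcases Int.units_eq_one_or (Equiv.Perm.sign σ) with h | h <;> rw [h] <;>
    simpa using Finset.univ.abs_prod_sub_prod_le (fun i _ => hA (σ i) i) (fun i _ => hB (σ i) i)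
      (fun i _ => hAB (σ i) i) |>.trans_eq' (by simp [abs_sub_comm])
  · simp [Fintype.card_perm]

lemma abs_apply_le_of_norm_mulVec_le {B : Matrix n n ℝ} {ε : ℝ}
    (h : ∀ v : EuclideanSpace ℝ n,
      ‖(EuclideanSpace.equiv n ℝ).symm (B *ᵥ EuclideanSpace.equiv n ℝ v)‖ ≤ ε * ‖v‖)
    (i j : n) : |B i j| ≤ ε := by
  have := (PiLp.norm_apply_le _ i).trans (h (EuclideanSpace.single j 1))
  have hsingle : EuclideanSpace.equiv n ℝ (EuclideanSpace.single j 1) = Pi.single j 1 := rfl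
  simpa [hsingle, mulVec_single_one] using this

lemma abs_det_sub_det_le_of_norm_mulVec_le {B : Matrix n n ℝ} {ε : ℝ} (hc : 0 ≤ c)
    (hA₁ : c • 1 ≤ A) (hA₂ : A ≤ C • 1) (hB₁ : c • 1 ≤ B) (hB₂ : B ≤ C • 1)
    (h : ∀ v : EuclideanSpace ℝ n,
      ‖(EuclideanSpace.equiv n ℝ).symm ((A - B) *ᵥ EuclideanSpace.equiv n ℝ v)‖ ≤ ε * ‖v‖) :
    |A.det - B.det| ≤
      (Fintype.card n).factorial * (Fintype.card n * C ^ (Fintype.card n - 1) * ε) :=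
  abs_det_sub_det_le (abs_apply_le_of_smul_one_le_of_le_smul_one hc hA₁ hA₂)
    (abs_apply_le_of_smul_one_le_of_le_smul_one hc hB₁ hB₂)
    (fun i j => by simpa using abs_apply_le_of_norm_mulVec_le h i j)

end Matrix

section Hessian

variable {d : ℕ} {ζ : EuclideanSpace ℝ (Fin d) → ℝ}

lemma hessE_apply {x : EuclideanSpace ℝ (Fin d)} (h : DifferentiableAt ℝ (fderiv ℝ ζ) x)
    (i j : Fin d) :
    hessE ζ x i j =
      fderiv ℝ (fderiv ℝ ζ) x (EuclideanSpace.single i 1) (EuclideanSpace.single j 1) := by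
  simp [hessE, fderiv_clm_apply h (differentiableAt_const _)]

lemma fderiv_fderiv_apply_self_eq_dotProduct_hessE {x : EuclideanSpace ℝ (Fin d)}
    (h : DifferentiableAt ℝ (fderiv ℝ ζ) x) (u : EuclideanSpace ℝ (Fin d)) :
    fderiv ℝ (fderiv ℝ ζ) x u u =
      EuclideanSpace.equiv _ ℝ u ⬝ᵥ (hessE ζ x *ᵥ EuclideanSpace.equiv _ ℝ u) := by
  have hu : u = ∑ i, u i • EuclideanSpace.single i 1 := by
    simpa using ((EuclideanSpace.basisFun (Fin d) ℝ).sum_repr u).symm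
  conv_lhs => rw [hu]
  simp only [map_sum, map_smul, _root_.sum_apply, _root_.smul_apply, smul_eq_mul,
    Finset.mul_sum, dotProduct, PiLp.continuousLinearEquiv_apply, mulVec, hessE_apply h]
  rw [Finset.sum_comm]
  exact Finset.sum_congr rfl fun i _ => Finset.sum_congr rfl fun j _ => by ring

lemma mul_norm_sq_le_inner_gradient_sub (hζ : Differentiable ℝ (fderiv ℝ ζ))
    {Ω : Set (EuclideanSpace ℝ (Fin d))} (hΩ : Convex ℝ Ω) {c : ℝ}
    (hc : ∀ z ∈ Ω, c • 1 ≤ hessE ζ z) {x y : EuclideanSpace ℝ (Fin d)} (hx : x ∈ Ω)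
    (hy : y ∈ Ω) : c * ‖x - y‖ ^ 2 ≤ inner ℝ (gradient ζ x - gradient ζ y) (x - y) := by
  set u := x - y
  set ψ : ℝ → ℝ := fun t => fderiv ℝ ζ (y + t • u) u
  have hψ (t : ℝ) : HasDerivAt ψ (fderiv ℝ (fderiv ℝ ζ) (y + t • u) u u) t := by
    have hline : HasDerivAt (fun s : ℝ => y + s • u) u t := by
      simpa using ((hasDerivAt_id t).smul_const u).const_add y
    simpa using ((hζ _).hasFDerivAt.comp_hasDerivAt t hline).clm_apply (hasDerivAt_const t u)
  obtain ⟨ξ, hξ, hslope⟩ := exists_hasDerivAt_eq_slope ψ _ zero_lt_one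
    (fun t _ => (hψ t).continuousAt.continuousWithinAt) (fun t _ => hψ t)
  have hmem : y + ξ • u ∈ Ω := by
    convert hΩ.add_smul_sub_mem hy hx ⟨hξ.1.le, hξ.2.le⟩ using 1
  have hψ_eq (z : EuclideanSpace ℝ (Fin d)) (t : ℝ) (hz : y + t • u = z) :
      ψ t = inner ℝ (gradient ζ z) u := by
    simp [ψ, hz, gradient, InnerProductSpace.toDual_symm_apply]
  have hnorm : EuclideanSpace.equiv _ ℝ u ⬝ᵥ EuclideanSpace.equiv _ ℝ u = ‖u‖ ^ 2 := by
    rw [← real_inner_self_eq_norm_sq, EuclideanSpace.inner_eq_star_dotProduct, star_trivial]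
    rfl
  calc c * ‖u‖ ^ 2 ≤ fderiv ℝ (fderiv ℝ ζ) (y + ξ • u) u u := by
        rw [fderiv_fderiv_apply_self_eq_dotProduct_hessE (hζ _), ← hnorm]
        exact mul_dotProduct_self_le_of_smul_one_le (hc _ hmem) _
    _ = ψ 1 - ψ 0 := by simpa using hslope
    _ = inner ℝ (gradient ζ x - gradient ζ y) u := by
        rw [hψ_eq x 1 (by simp [u]), hψ_eq y 0 (by simp), inner_sub_left]

lemma mul_norm_sub_le_norm_gradient_sub (hζ : Differentiable ℝ (fderiv ℝ ζ))
    {Ω : Set (EuclideanSpace ℝ (Fin d))} (hΩ : Convex ℝ Ω) {c : ℝ}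
    (hc : ∀ z ∈ Ω, c • 1 ≤ hessE ζ z) {x y : EuclideanSpace ℝ (Fin d)} (hx : x ∈ Ω)
    (hy : y ∈ Ω) : c * ‖x - y‖ ≤ ‖gradient ζ x - gradient ζ y‖ := by
  rcases (norm_nonneg (x - y)).eq_or_lt with h | h
  · rw [← h, mul_zero]
    exact norm_nonneg _
  refine le_of_mul_le_mul_right ?_ h
  calc c * ‖x - y‖ * ‖x - y‖ = c * ‖x - y‖ ^ 2 := by ring
    _ ≤ inner ℝ (gradient ζ x - gradient ζ y) (x - y) :=
        mul_norm_sq_le_inner_gradient_sub hζ hΩ hc hx hy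
    _ ≤ ‖gradient ζ x - gradient ζ y‖ * ‖x - y‖ := real_inner_le_norm _ _

end Hessian

/-- **geodesic interpolation preserves Hölder regularity and
non-degeneracy.**  There is a constant `C > 0` depending only on `a, M, λ, Λ, α, d` such
that: for every bounded convex open `Ω ⊂ ℝ^d`, every `C²` function `ζ` with
`λ·I ≤ D²ζ ≤ Λ·I` on `Ω` and `‖D²ζ(x) - D²ζ(y)‖_{op} ≤ M|x-y|^α`, and every `f₀` with
`a ≤ f₀ ≤ M` which is `α`-Hölder with constant `M`, the function
`h = f₀ / det D²ζ` satisfies `a·Λ^{-d} ≤ h ≤ M·λ^{-d}` on `Ω` and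
`|h(x) - h(y)| ≤ C·‖∇ζ(x) - ∇ζ(y)‖^α` for all `x, y ∈ Ω`. -/
theorem stmt13 (d : ℕ) (α a M lam Λ : ℝ) (hα : α ∈ Set.Ioc (0 : ℝ) 1)
    (ha : 0 < a) (hlam : 0 < lam) (hlamΛ : lam ≤ Λ) (haM : a ≤ M) :
    ∃ C > (0 : ℝ),
      ∀ Ω : Set (EuclideanSpace ℝ (Fin d)), IsOpen Ω → Convex ℝ Ω → Bornology.IsBounded Ω →
      ∀ ζ f₀ : EuclideanSpace ℝ (Fin d) → ℝ, ContDiff ℝ 2 ζ →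
        (∀ x ∈ Ω, (hessE ζ x - lam • (1 : Matrix (Fin d) (Fin d) ℝ)).PosSemidef) →
        (∀ x ∈ Ω, (Λ • (1 : Matrix (Fin d) (Fin d) ℝ) - hessE ζ x).PosSemidef) →
        (∀ x ∈ Ω, ∀ y ∈ Ω, ∀ v : EuclideanSpace ℝ (Fin d),
          ‖(EuclideanSpace.equiv (Fin d) ℝ).symm
              ((hessE ζ x - hessE ζ y) *ᵥ (EuclideanSpace.equiv (Fin d) ℝ) v)‖ ≤
            M * ‖x - y‖ ^ α * ‖v‖) →
        (∀ x ∈ Ω, a ≤ f₀ x) → (∀ x ∈ Ω, f₀ x ≤ M) →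
        (∀ x ∈ Ω, ∀ y ∈ Ω, |f₀ x - f₀ y| ≤ M * ‖x - y‖ ^ α) →
        ∀ x ∈ Ω,
          (a / Λ ^ d ≤ f₀ x / (hessE ζ x).det ∧ f₀ x / (hessE ζ x).det ≤ M / lam ^ d) ∧
          ∀ y ∈ Ω, |f₀ x / (hessE ζ x).det - f₀ y / (hessE ζ y).det| ≤
            C * ‖gradient ζ x - gradient ζ y‖ ^ α := by
  obtain ⟨hα₀, -⟩ := hα
  have hM : 0 < M := ha.trans_le haM
  have hΛ : 0 ≤ Λ := hlam.le.trans hlamΛ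
  set L : ℝ := d.factorial * (d * Λ ^ (d - 1))
  refine ⟨(M / lam ^ d + M * (L * M) / (lam ^ d) ^ 2) * lam⁻¹ ^ α, by positivity, ?_⟩
  intro Ω _ hΩ _ ζ f₀ hζ hl hu hhess hfa hfM hf x hx
  have hζ' : Differentiable ℝ (fderiv ℝ ζ) :=
    (hζ.fderiv_right (m := 1) le_rfl).differentiable one_ne_zero
  have hdet (z) (hz : z ∈ Ω) : (hessE ζ z).det ∈ Set.Icc (lam ^ d) (Λ ^ d) := by
    simpa using det_mem_Icc hlam.le (hl z hz) (hu z hz)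
  have hlamd : 0 < lam ^ d := pow_pos hlam d
  refine ⟨⟨div_le_div₀ (ha.le.trans (hfa x hx)) (hfa x hx) (hlamd.trans_le (hdet x hx).1)
    (hdet x hx).2, div_le_div₀ hM.le (hfM x hx) hlamd (hdet x hx).1⟩, fun y hy => ?_⟩
  have hgrad : ‖x - y‖ ^ α ≤ lam⁻¹ ^ α * ‖gradient ζ x - gradient ζ y‖ ^ α := by
    rw [← Real.mul_rpow (by positivity) (norm_nonneg _)]
    refine Real.rpow_le_rpow (norm_nonneg _) ?_ hα₀.le
    rw [le_inv_mul_iff₀ hlam]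
    exact mul_norm_sub_le_norm_gradient_sub hζ' hΩ hl hx hy
  have hdetHolder : |(hessE ζ x).det - (hessE ζ y).det| ≤ L * (M * ‖x - y‖ ^ α) := by
    simpa [L, mul_assoc] using abs_det_sub_det_le_of_norm_mulVec_le hlam.le (hl x hx) (hu x hx)
      (hl y hy) (hu y hy) (hhess x hx y hy)
  calc _ ≤ M * ‖x - y‖ ^ α / lam ^ d + M * (L * (M * ‖x - y‖ ^ α)) / (lam ^ d) ^ 2 :=
        abs_div_sub_div_le hlamd (hdet x hx).1 (hdet y hy).1
          (abs_le.2 ⟨by linarith [hfa y hy], hfM y hy⟩) (hf x hx y hy) hdetHolder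
    _ = (M / lam ^ d + M * (L * M) / (lam ^ d) ^ 2) * ‖x - y‖ ^ α := by ring
    _ ≤ (M / lam ^ d + M * (L * M) / (lam ^ d) ^ 2) *
          (lam⁻¹ ^ α * ‖gradient ζ x - gradient ζ y‖ ^ α) := by gcongr
    _ = _ := by ring
end

section
/- Let ζ : ℝ^d → ℝ be twice continuously differentiable and suppose there are 0 < λ ≤ Λ with λ·I ≤ D²ζ(x) ≤ Λ·I for all x ∈ ℝ^d. Fix x ∈ ℝ^d and suppose y : (0,1) → ℝ^d is continuous and satisfies (1 − t)·y(t) + t·∇ζ(y(t)) = x for every t ∈ (0,1). Then y is differentiable on (0,1) and y'(t) = −( (1−t)·I + t·D²ζ(y(t)) )^{−1} ( ∇ζ(y(t)) − y(t) ) for every t ∈ (0,1). -/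
/-!
The map `(t, z) ↦ (1 - t) • z + t • ∇ζ z` is `C¹`, and its partial derivative in `z` at
`(t, y t)` is the operator of the matrix `(1 - t) I + t D²ζ(y t)`, which is positive definite
because `D²ζ ≥ λ I ≥ 0`. The implicit function theorem then yields, near `(t, y t)`, a unique
differentiable solution branch of `(1 - t) • z + t • ∇ζ z = x`, with derivative
`-((1 - t) I + t D²ζ)⁻¹ (∇ζ - z)`; being continuous, `y` coincides with that branch near `t`.
-/

open Matrix

open Topology Filter

section ImplicitFunction

variable {𝕜 : Type*} [NontriviallyNormedField 𝕜]
  {E₁ E₂ F : Type*} [NormedAddCommGroup E₁] [NormedSpace 𝕜 E₁] [CompleteSpace E₁]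
  [NormedAddCommGroup E₂] [NormedSpace 𝕜 E₂] [CompleteSpace E₂]
  [NormedAddCommGroup F] [NormedSpace 𝕜 F] [CompleteSpace F]

theorem HasStrictFDerivAt.hasFDerivAt_of_continuousAt_of_eventually_apply_eq
    {f : E₁ × E₂ → F} {f' : E₁ × E₂ →L[𝕜] F} {y : E₁ → E₂} {a : E₁}
    (hf : HasStrictFDerivAt f f' (a, y a)) (hf₂ : (f' ∘L .inr 𝕜 E₁ E₂).IsInvertible)
    (hy : ContinuousAt y a) (hfy : ∀ᶠ x in 𝓝 a, f (x, y x) = f (a, y a)) :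
    HasFDerivAt y (-(f' ∘L .inr 𝕜 E₁ E₂).inverse ∘L (f' ∘L .inl 𝕜 E₁ E₂)) a := by
  have hgraph : Tendsto (fun x => (x, y x)) (𝓝 a) (𝓝 (a, y a)) :=
    (continuousAt_id.prodMk hy).tendsto
  have hψ : hf.implicitFunctionOfProdDomain hf₂ =ᶠ[𝓝 a] y := by
    filter_upwards [hfy, hgraph.eventually
      (hf.eventually_apply_eq_iff_implicitFunctionOfProdDomain hf₂)] with x hx hiff
    exact hiff.1 hx
  exact (hf.hasStrictFDerivAt_implicitFunctionOfProdDomain hf₂).hasFDerivAt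
    |>.congr_of_eventuallyEq hψ.symm

end ImplicitFunction

theorem hasStrictFDerivAt_one_sub_smul_add_smul {E : Type*} [NormedAddCommGroup E]
    [NormedSpace ℝ E] {g : E → E} (hg : ContDiff ℝ 1 g) (t : ℝ) (z : E) :
    HasStrictFDerivAt (fun p : ℝ × E => (1 - p.1) • p.2 + p.1 • g p.2)
      ((ContinuousLinearMap.toSpanSingleton ℝ (g z - z)).coprod
        ((1 - t) • ContinuousLinearMap.id ℝ E + t • fderiv ℝ g z)) (t, z) := by
  have hgd : Differentiable ℝ g := hg.differentiable one_ne_zero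
  refine hasStrictFDerivAt_uncurry_coprod (u := (t, z))
    (f := fun t z => (1 - t) • z + t • g z)
    (f₁ := fun _ z => ContinuousLinearMap.toSpanSingleton ℝ (g z - z))
    (f₂ := fun t z => (1 - t) • ContinuousLinearMap.id ℝ E + t • fderiv ℝ g z)
    (.of_forall fun v => ?_) (.of_forall fun v => ?_) ?_ ?_
  · have h := ((hasDerivAt_id v.1).const_sub 1 |>.smul_const v.2).add
      ((hasDerivAt_id v.1).smul_const (g v.2))
    rw [neg_one_smul, one_smul, neg_add_eq_sub] at h
    exact h
  · exact ((hasFDerivAt_id v.2).const_smul (1 - v.1)).add ((hgd v.2).hasFDerivAt.const_smul v.1)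
  · exact ((ContinuousLinearMap.toSpanSingletonLIE ℝ E).continuous.comp
      (by fun_prop : Continuous fun v : ℝ × E => g v.2 - v.2)).continuousAt
  · have hDg : Continuous (fderiv ℝ g) := hg.continuous_fderiv one_ne_zero
    exact (by fun_prop : Continuous fun v : ℝ × E =>
      (1 - v.1) • ContinuousLinearMap.id ℝ E + v.1 • fderiv ℝ g v.2).continuousAt

theorem ContDiffAt.gradient {E : Type*} [NormedAddCommGroup E] [InnerProductSpace ℝ E]
    [CompleteSpace E] {f : E → ℝ} {x : E} {m n : WithTop ℕ∞} (hf : ContDiffAt ℝ n f x)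
    (hmn : m + 1 ≤ n) : ContDiffAt ℝ m (gradient f) x :=
  (InnerProductSpace.toDual ℝ E).symm.contDiff.contDiffAt.comp x (hf.fderiv_right hmn)

section Hessian

variable {d : ℕ} {ζ : EuclideanSpace ℝ (Fin d) → ℝ} {z : EuclideanSpace ℝ (Fin d)}

theorem gradient_apply_eq_fderiv_single (i : Fin d) :
    gradient ζ z i = fderiv ℝ ζ z (EuclideanSpace.single i 1) := by
  rw [← inner_gradient_left, EuclideanSpace.inner_single_right]
  simp

theorem hessE_apply_eq_fderiv_fderiv (hζ : DifferentiableAt ℝ (fderiv ℝ ζ) z) (i j : Fin d) :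
    hessE ζ z i j =
      fderiv ℝ (fderiv ℝ ζ) z (EuclideanSpace.single i 1) (EuclideanSpace.single j 1) := by
  have hcomp : (fun y => fderiv ℝ ζ y (EuclideanSpace.single j 1)) =
      ContinuousLinearMap.apply ℝ ℝ (EuclideanSpace.single j (1 : ℝ)) ∘ fderiv ℝ ζ := rfl
  rw [hessE, of_apply, hcomp, ((ContinuousLinearMap.apply ℝ ℝ _).hasFDerivAt.comp z
    hζ.hasFDerivAt).fderiv]
  rfl

theorem isSymm_hessE (hζ : ContDiffAt ℝ 2 ζ z) : (hessE ζ z).IsSymm := by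
  have hDζ : DifferentiableAt ℝ (fderiv ℝ ζ) z :=
    (hζ.fderiv_right (m := 1) (by norm_num)).differentiableAt one_ne_zero
  ext i j
  rw [transpose_apply, hessE_apply_eq_fderiv_fderiv hDζ, hessE_apply_eq_fderiv_fderiv hDζ]
  exact (hζ.isSymmSndFDerivAt (by simp)).eq _ _

theorem fderiv_gradient_eq_toEuclideanCLM_hessE (hζ : ContDiffAt ℝ 2 ζ z) :
    fderiv ℝ (gradient ζ) z = toEuclideanCLM (𝕜 := ℝ) (hessE ζ z) := by
  have hgrad : DifferentiableAt ℝ (gradient ζ) z :=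
    (hζ.gradient (m := 1) (by norm_num)).differentiableAt one_ne_zero
  refine ContinuousLinearMap.coe_injective <|
    (EuclideanSpace.basisFun (Fin d) ℝ).toBasis.ext fun j => ?_
  ext i
  have hcoord : EuclideanSpace.proj i ∘ gradient ζ =
      fun y => fderiv ℝ ζ y (EuclideanSpace.single i 1) :=
    funext fun _ => gradient_apply_eq_fderiv_single i
  have hchain := ((EuclideanSpace.proj i : _ →L[ℝ] ℝ).hasFDerivAt.comp z hgrad.hasFDerivAt).fderiv
  rw [hcoord] at hchain
  have := congr($hchain (EuclideanSpace.single j 1))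
  simp only [OrthonormalBasis.coe_toBasis, EuclideanSpace.basisFun_apply,
    ContinuousLinearMap.coe_coe, ofLp_toEuclideanCLM, PiLp.ofLp_single, mulVec_single_one,
    col_apply]
  rw [← (isSymm_hessE hζ).apply]
  exact this.symm

end Hessian

section toEuclideanCLM

variable {𝕜 n : Type*} [RCLike 𝕜] [Fintype n] [DecidableEq n] {A : Matrix n n 𝕜}

theorem Matrix.toEuclideanCLM_comp_toEuclideanCLM_inv (hA : IsUnit A) :
    toEuclideanCLM (𝕜 := 𝕜) A ∘L toEuclideanCLM (𝕜 := 𝕜) A⁻¹ = .id 𝕜 _ := by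
  rw [← ContinuousLinearMap.mul_def, ← map_mul,
    mul_nonsing_inv _ ((isUnit_iff_isUnit_det A).1 hA), map_one, ContinuousLinearMap.one_def]

theorem Matrix.toEuclideanCLM_inv_comp_toEuclideanCLM (hA : IsUnit A) :
    toEuclideanCLM (𝕜 := 𝕜) A⁻¹ ∘L toEuclideanCLM (𝕜 := 𝕜) A = .id 𝕜 _ := by
  rw [← ContinuousLinearMap.mul_def, ← map_mul,
    nonsing_inv_mul _ ((isUnit_iff_isUnit_det A).1 hA), map_one, ContinuousLinearMap.one_def]

end toEuclideanCLM

theorem stmt14_general {d : ℕ} (lam : ℝ) (hlam : 0 < lam)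
    (ζ : EuclideanSpace ℝ (Fin d) → ℝ) (hζ : ContDiff ℝ 2 ζ)
    (hlower : ∀ x, (hessE ζ x - lam • (1 : Matrix (Fin d) (Fin d) ℝ)).PosSemidef)
    (x : EuclideanSpace ℝ (Fin d)) (y : ℝ → EuclideanSpace ℝ (Fin d))
    (hycont : ContinuousOn y (Set.Ioo (0 : ℝ) 1))
    (hyeq : ∀ t ∈ Set.Ioo (0 : ℝ) 1, (1 - t) • y t + t • gradient ζ (y t) = x) :
    ∀ t ∈ Set.Ioo (0 : ℝ) 1,
      HasDerivAt y
        (-(EuclideanSpace.equiv (Fin d) ℝ).symm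
            ((((1 - t) • (1 : Matrix (Fin d) (Fin d) ℝ) + t • hessE ζ (y t))⁻¹) *ᵥ
              (EuclideanSpace.equiv (Fin d) ℝ) (gradient ζ (y t) - y t))) t := by
  intro t ht
  set A := (1 - t) • (1 : Matrix (Fin d) (Fin d) ℝ) + t • hessE ζ (y t)
  have hA : IsUnit A := by
    have hH : (hessE ζ (y t)).PosSemidef := by
      simpa using (hlower (y t)).add (PosSemidef.one.smul hlam.le)
    exact ((PosDef.one.smul (sub_pos.2 ht.2)).add_posSemidef (hH.smul ht.1.le)).isUnit
  have hL : (1 - t) • ContinuousLinearMap.id ℝ _ + t • fderiv ℝ (gradient ζ) (y t) =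
      toEuclideanCLM (𝕜 := ℝ) A := by
    rw [fderiv_gradient_eq_toEuclideanCLM_hessE hζ.contDiffAt, map_add, map_smul, map_smul,
      map_one]
    rfl
  have hgrad : ContDiff ℝ 1 (gradient ζ) :=
    contDiff_iff_contDiffAt.2 fun _ => hζ.contDiffAt.gradient (by norm_num)
  have hIoo : Set.Ioo (0 : ℝ) 1 ∈ 𝓝 t := Ioo_mem_nhds ht.1 ht.2
  have h₁ := toEuclideanCLM_comp_toEuclideanCLM_inv hA
  have h₂ := toEuclideanCLM_inv_comp_toEuclideanCLM hA
  have hderiv := (hasStrictFDerivAt_one_sub_smul_add_smul hgrad t (y t))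
    |>.hasFDerivAt_of_continuousAt_of_eventually_apply_eq
      (by simpa [hL] using ContinuousLinearMap.IsInvertible.of_inverse h₁ h₂)
      (hycont.continuousAt hIoo)
      (by filter_upwards [hIoo] with s hs using (hyeq s hs).trans (hyeq t ht).symm)
  rw [ContinuousLinearMap.coprod_comp_inr, ContinuousLinearMap.coprod_comp_inl, hL,
    ContinuousLinearMap.inverse_eq h₁ h₂] at hderiv
  have hderiv' := hderiv.hasDerivAt
  simp only [_root_.neg_apply, ContinuousLinearMap.comp_apply,
    ContinuousLinearMap.toSpanSingleton_apply, one_smul] at hderiv'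
  exact hderiv'

/-- Let `ζ` be `C²` with `λ·I ≤ D²ζ ≤ Λ·I` everywhere.  If
`y : (0,1) → ℝ^d` is continuous and satisfies `(1-t)·y(t) + t·∇ζ(y(t)) = x` for all
`t ∈ (0,1)`, then `y` is differentiable on `(0,1)` with
`y'(t) = -((1-t)·I + t·D²ζ(y(t)))⁻¹ (∇ζ(y(t)) - y(t))`. -/
theorem stmt14 {d : ℕ} (lam Λ : ℝ) (hlam : 0 < lam) (hlamΛ : lam ≤ Λ)
    (ζ : EuclideanSpace ℝ (Fin d) → ℝ) (hζ : ContDiff ℝ 2 ζ)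
    (hlower : ∀ x, (hessE ζ x - lam • (1 : Matrix (Fin d) (Fin d) ℝ)).PosSemidef)
    (hupper : ∀ x, (Λ • (1 : Matrix (Fin d) (Fin d) ℝ) - hessE ζ x).PosSemidef)
    (x : EuclideanSpace ℝ (Fin d)) (y : ℝ → EuclideanSpace ℝ (Fin d))
    (hycont : ContinuousOn y (Set.Ioo (0 : ℝ) 1))
    (hyeq : ∀ t ∈ Set.Ioo (0 : ℝ) 1, (1 - t) • y t + t • gradient ζ (y t) = x) :
    ∀ t ∈ Set.Ioo (0 : ℝ) 1,
      HasDerivAt y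
        (-(EuclideanSpace.equiv (Fin d) ℝ).symm
            ((((1 - t) • (1 : Matrix (Fin d) (Fin d) ℝ) + t • hessE ζ (y t))⁻¹) *ᵥ
              (EuclideanSpace.equiv (Fin d) ℝ) (gradient ζ (y t) - y t))) t :=
  stmt14_general lam hlam ζ hζ hlower x y hycont hyeq
end
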